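/- With P the generic antisymmetric extrasymmetric 6×6 matrix over ℤ[a,...,i,p,q] (entries P₁₂=a, P₁₃=b, P₁₄=c, P₁₅=d, P₁₆=e, P₂₃=f, P₂₄=g, P₂₅=h, P₂₆=d, P₃₄=i, P₃₅=pg, P₃₆=pc, P₄₅=qf, P₄₆=qb, P₅₆=pqa), the 4×4 Pfaffian on the index set {1,3,4,5} equals the 4×4 Pfaffian on the index set {2,3,4,6}; explicitly both equal bqf - cpg + di. -/

import Mathlib

namespace Stmt8

open MvPolynomial

/-- The coefficient ring ℤ[a,b,c,d,e,f,g,h,i,p,q]. -/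
noncomputable abbrev R : Type := MvPolynomial (Fin 11) ℤ

noncomputable def a : R := X 0
noncomputable def b : R := X 1
noncomputable def c : R := X 2
noncomputable def d : R := X 3
noncomputable def e : R := X 4
noncomputable def f : R := X 5
noncomputable def g : R := X 6
noncomputable def h : R := X 7
noncomputable def i : R := X 8
noncomputable def p : R := X 9
noncomputable def q : R := X 10

/-- The generic antisymmetric extrasymmetric 6×6 matrix. -/
noncomputable def P : Matrix (Fin 6) (Fin 6) R :=
  !![0, a, b, c, d, e;
     -a, 0, f, g, h, d;
     -b, -f, 0, i, p*g, p*c;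
     -c, -g, -i, 0, q*f, q*b;
     -d, -h, -(p*g), -(q*f), 0, p*q*a;
     -e, -d, -(p*c), -(q*b), -(p*q*a), 0]

/-- The 4×4 Pfaffian of an antisymmetric matrix on rows/columns i<j<k<l. -/
noncomputable def pf (M : Matrix (Fin 6) (Fin 6) R) (i j k l : Fin 6) : R :=
  M i j * M k l - M i k * M j l + M i l * M j k

theorem pf_P_0_2_3_4 : pf P 0 2 3 4 = b * (q * f) - c * (p * g) + d * i := rfl

theorem pf_P_1_2_3_5 : pf P 1 2 3 5 = f * (q * b) - g * (p * c) + d * i := rfl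

/-- The Pfaffians on {1,3,4,5} and {2,3,4,6} coincide; both equal bqf - cpg + di. -/
theorem stmt_8 :
    pf P 0 2 3 4 = pf P 1 2 3 5 ∧
    pf P 0 2 3 4 = b * q * f - c * p * g + d * i := by
  rw [pf_P_0_2_3_4, pf_P_1_2_3_5]
  constructor <;> ring

end Stmt8
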